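/- Let (a,b) ⊆ ℝ be a bounded interval and p ≥ 1. Define ψ₁(x) := 1 and ψ₂(x) := [(x-a)(b-x)]^{-1/p} for x ∈ (a,b). Then ‖ψ₁‖_{p,w,(a,b)} = (b-a)^{1/p} and ‖ψ₂‖_{p,w,(a,b)} ≤ (4/(b-a))^{1/p}. -/

import Mathlib

/-!
For `ψ₁ = 1` the level set `{|ψ₁| > M}` is all of `(a,b)` for `M < 1` and empty otherwise, so the
supremum is `(b-a)^(1/p)`. For `ψ₂`, the inequality `ψ₂ > M` means `(x-a)(b-x) < M^(-p)`; on either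
half of `(a,b)` one of the two factors is at least `(b-a)/2`, so this level set lies within
`2M^(-p)/(b-a)` of the endpoints. Its measure is therefore at most `4M^(-p)/(b-a)`, which is exactly
the bound `M · meas^(1/p) ≤ (4/(b-a))^(1/p)`.
-/

open MeasureTheory Set
open scoped ENNReal NNReal

/-- The weak `L^p` quasinorm of `ψ` over `Ω ⊆ ℝ`:
`sup_{M ≥ 0} M · (meas {x ∈ Ω : |ψ(x)| > M})^(1/p)`. -/
noncomputable def weakLpNorm (p : ℝ) (Ω : Set ℝ) (ψ : ℝ → ℝ) : ℝ≥0∞ :=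
  ⨆ M : ℝ≥0, (M : ℝ≥0∞) * (volume {x | x ∈ Ω ∧ (M : ℝ) < |ψ x|}) ^ (1 / p)

lemma iSup_ite_coe_lt_eq_ofReal (r : ℝ) :
    ⨆ M : ℝ≥0, (if (M : ℝ) < r then (M : ℝ≥0∞) else 0) = ENNReal.ofReal r := by
  refine le_antisymm (iSup_le fun M => ?_) (le_of_forall_lt fun x hx => ?_)
  · split_ifs with h
    · rw [← ENNReal.ofReal_coe_nnreal]
      exact ENNReal.ofReal_le_ofReal h.le
    · exact zero_le
  · obtain ⟨M, hxM, hMr⟩ := ENNReal.lt_iff_exists_nnreal_btwn.1 hx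
    refine hxM.trans_le (le_iSup_of_le M ?_)
    rw [if_pos (ENNReal.coe_lt_ofReal.1 hMr)]

theorem weakLpNorm_const {p : ℝ} (hp : 0 < p) (Ω : Set ℝ) (c : ℝ) :
    weakLpNorm p Ω (fun _ => c) = ENNReal.ofReal |c| * volume Ω ^ (1 / p) := by
  have hterm : ∀ M : ℝ≥0, (M : ℝ≥0∞) * volume {x | x ∈ Ω ∧ (M : ℝ) < |c|} ^ (1 / p) =
      (if (M : ℝ) < |c| then (M : ℝ≥0∞) else 0) * volume Ω ^ (1 / p) := by
    intro M
    split_ifs with h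
    · simp [h]
    · simp [h, hp]
  simp_rw [weakLpNorm, hterm, ← ENNReal.iSup_mul, iSup_ite_coe_lt_eq_ofReal]

theorem weakLpNorm_le_of_volume_le {p : ℝ} (hp : 0 < p) {Ω : Set ℝ} {ψ : ℝ → ℝ} {C : ℝ}
    (hC : 0 ≤ C)
    (h : ∀ M : ℝ, 0 < M → volume {x | x ∈ Ω ∧ M < |ψ x|} ≤ ENNReal.ofReal (C * M ^ (-p))) :
    weakLpNorm p Ω ψ ≤ ENNReal.ofReal (C ^ (1 / p)) := by
  refine iSup_le fun M => ?_
  rcases eq_or_ne M 0 with rfl | hM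
  · simp
  have hM : (0 : ℝ) < M := NNReal.coe_pos.2 (pos_iff_ne_zero.2 hM)
  calc (M : ℝ≥0∞) * volume {x | x ∈ Ω ∧ (M : ℝ) < |ψ x|} ^ (1 / p)
      ≤ (M : ℝ≥0∞) * ENNReal.ofReal (C * M ^ (-p)) ^ (1 / p) := by gcongr; exact h M hM
    _ = ENNReal.ofReal (M * (C * M ^ (-p)) ^ (1 / p)) := by
      rw [ENNReal.ofReal_rpow_of_nonneg (by positivity) (by positivity),
        ENNReal.ofReal_mul hM.le, ENNReal.ofReal_coe_nnreal]
    _ = ENNReal.ofReal (C ^ (1 / p)) := by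
      rw [Real.mul_rpow hC (by positivity), ← Real.rpow_mul hM.le,
        neg_mul, mul_one_div_cancel hp.ne', Real.rpow_neg_one, mul_left_comm,
        mul_inv_cancel₀ hM.ne', mul_one]

lemma sep_Ioo_mul_sub_lt_subset {a b : ℝ} (hab : a < b) (c : ℝ) :
    {x | x ∈ Ioo a b ∧ (x - a) * (b - x) < c} ⊆
      Ioo a (a + 2 * c / (b - a)) ∪ Ioo (b - 2 * c / (b - a)) b := by
  rintro x ⟨⟨hax, hxb⟩, hx⟩
  have hd : 2 * c / (b - a) * (b - a) = 2 * c := div_mul_cancel₀ _ (sub_pos.2 hab).ne'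
  rcases le_total x ((a + b) / 2) with hmid | hmid
  · exact Or.inl ⟨hax, by nlinarith⟩
  · exact Or.inr ⟨by nlinarith, hxb⟩

theorem volume_sep_Ioo_mul_sub_lt_le {a b : ℝ} (hab : a < b) (c : ℝ) :
    volume {x | x ∈ Ioo a b ∧ (x - a) * (b - x) < c} ≤ ENNReal.ofReal (4 * c / (b - a)) :=
  calc volume {x | x ∈ Ioo a b ∧ (x - a) * (b - x) < c}
      ≤ volume (Ioo a (a + 2 * c / (b - a)) ∪ Ioo (b - 2 * c / (b - a)) b) :=
        measure_mono (sep_Ioo_mul_sub_lt_subset hab c)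
    _ ≤ volume (Ioo a (a + 2 * c / (b - a))) + volume (Ioo (b - 2 * c / (b - a)) b) :=
        measure_union_le _ _
    _ = ENNReal.ofReal (4 * c / (b - a)) := by
      rw [Real.volume_Ioo, Real.volume_Ioo, add_sub_cancel_left, sub_sub_cancel, ← two_mul,
        ← ENNReal.ofReal_ofNat 2, ← ENNReal.ofReal_mul zero_le_two]
      ring_nf

/-- **Weak `L^p` quasinorms of two model functions.**
On a bounded interval `(a,b)` with `p ≥ 1`, the constant function `ψ₁ = 1` has
`‖ψ₁‖_{p,w,(a,b)} = (b-a)^(1/p)`, and `ψ₂(x) = ((x-a)(b-x))^(-1/p)` satisfies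
`‖ψ₂‖_{p,w,(a,b)} ≤ (4/(b-a))^(1/p)`. -/
theorem weak_lp_model_functions (a b : ℝ) (hab : a < b) (p : ℝ) (hp : 1 ≤ p) :
    weakLpNorm p (Ioo a b) (fun _ => (1 : ℝ)) = ENNReal.ofReal ((b - a) ^ (1 / p)) ∧
    weakLpNorm p (Ioo a b) (fun x => ((x - a) * (b - x)) ^ (-(1 / p))) ≤
      ENNReal.ofReal ((4 / (b - a)) ^ (1 / p)) := by
  have hp0 : 0 < p := zero_lt_one.trans_le hp
  refine ⟨?_, weakLpNorm_le_of_volume_le hp0 (div_nonneg zero_le_four (sub_pos.2 hab).le) ?_⟩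
  · rw [weakLpNorm_const hp0, abs_one, ENNReal.ofReal_one, one_mul, Real.volume_Ioo,
      ENNReal.ofReal_rpow_of_pos (sub_pos.2 hab)]
  intro M hM
  have hlevel : {x | x ∈ Ioo a b ∧ M < |((x - a) * (b - x)) ^ (-(1 / p))|} ⊆
      {x | x ∈ Ioo a b ∧ (x - a) * (b - x) < M ^ (-p)} := by
    rintro x ⟨hx, hMx⟩
    have hpos : 0 < (x - a) * (b - x) := mul_pos (sub_pos.2 hx.1) (sub_pos.2 hx.2)
    rw [abs_of_pos (Real.rpow_pos_of_pos hpos _), one_div, ← inv_neg] at hMx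
    exact ⟨hx, (Real.lt_rpow_inv_iff_of_neg hM hpos (neg_lt_zero.2 hp0)).1 hMx⟩
  calc volume {x | x ∈ Ioo a b ∧ M < |((x - a) * (b - x)) ^ (-(1 / p))|}
      ≤ volume {x | x ∈ Ioo a b ∧ (x - a) * (b - x) < M ^ (-p)} := measure_mono hlevel
    _ ≤ ENNReal.ofReal (4 * M ^ (-p) / (b - a)) := volume_sep_Ioo_mul_sub_lt_le hab _
    _ = ENNReal.ofReal (4 / (b - a) * M ^ (-p)) := by rw [div_mul_eq_mul_div]
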